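/- Let N ≥ 1, λ ∈ ℝ, and let a_j, c_j ∈ ℂ (1 ≤ j ≤ N) satisfy the strip condition −3δ/2 < Im a_j < −δ/2 for all j and the constraints c_j·(λ − i·Σ_{k=1}^N conj(c_k)·α(a_j − conj(a_k) + iδ)) + 1 = 0 for all j. Define u(x) := λ + i·Σ_{j=1}^N c_j·α(x − a_j − iδ/2), v(x) := −λ − i·Σ_{j=1}^N c_j·α(x − a_j + iδ/2), and B := λ² + (π/(2δ))²·|Σ_{j=1}^N c_j|². Then for every x ∈ ℝ: |u(x)|² = B − i·Σ_{j=1}^N (α(x − a_j − iδ/2) − α(x − conj(a_j) + iδ/2)) and |v(x)|² = B − i·Σ_{j=1}^N (α(x − a_j + iδ/2) − α(x − conj(a_j) − iδ/2)). In particular, the right-hand sides are real. -/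

import Mathlib

open MeasureTheory Filter Finset ComplexConjugate

noncomputable section

/-- `α(z) = (π/(2δ)) coth(πz/(2δ))`. -/
def cmAlpha (δ : ℝ) (z : ℂ) : ℂ :=
  ((Real.pi / (2 * δ) : ℝ) : ℂ) *
    (Complex.cosh ((Real.pi : ℂ) * z / (2 * (δ : ℂ))) /
     Complex.sinh ((Real.pi : ℂ) * z / (2 * (δ : ℂ))))

/-- `V(z) = (π/(2δ))² / sinh(πz/(2δ))²`. -/
def cmV (δ : ℝ) (z : ℂ) : ℂ :=
  ((Real.pi / (2 * δ) : ℝ) : ℂ) ^ 2 / Complex.sinh ((Real.pi : ℂ) * z / (2 * (δ : ℂ))) ^ 2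

/-- `V'(z) = -2 (π/(2δ))³ cosh(πz/(2δ)) / sinh(πz/(2δ))³`. -/
def cmV' (δ : ℝ) (z : ℂ) : ℂ :=
  -2 * ((Real.pi / (2 * δ) : ℝ) : ℂ) ^ 3 *
    Complex.cosh ((Real.pi : ℂ) * z / (2 * (δ : ℂ))) /
    Complex.sinh ((Real.pi : ℂ) * z / (2 * (δ : ℂ))) ^ 3

/-- real hyperbolic cotangent -/
def rcoth (y : ℝ) : ℝ := Real.cosh y / Real.sinh y

/-- `(T g)(x) = L`: the principal-value limit defining the operator `T` exists and equals `L`. -/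
def HasPV (δ : ℝ) (g : ℝ → ℂ) (x : ℝ) (L : ℂ) : Prop :=
  Tendsto (fun ε : ℝ =>
      (1 / (2 * (δ : ℂ))) *
        ∫ x' in {x' : ℝ | ε ≤ |x' - x|},
          ((rcoth (Real.pi * (x' - x) / (2 * δ)) : ℝ) : ℂ) * g x')
    (nhdsWithin 0 (Set.Ioi 0)) (nhds L)

/-- kernel of the operator `T̃`. -/
def TtKer (δ : ℝ) (x x' : ℝ) : ℝ := Real.tanh (Real.pi * (x' - x) / (2 * δ))

/-- the operator `T̃`. -/
def Ttilde (δ : ℝ) (g : ℝ → ℂ) (x : ℝ) : ℂ :=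
  (1 / (2 * (δ : ℂ))) * ∫ x', ((TtKer δ x x' : ℝ) : ℂ) * g x'

/-- `x' ↦ ∂_{x'} |w(x',t)|²`. -/
def sqAbsDeriv (w : ℝ → ℝ → ℂ) (t x' : ℝ) : ℝ :=
  deriv (fun y => norm (w y t) ^ 2) x'

/-- The intermediate mixed Manakov (IMM) system holds for the pair `(u,v)` at the point `(x,t)`,
including existence of the relevant principal-value limits and integrals. -/
def IMMat (δ : ℝ) (u v : ℝ → ℝ → ℂ) (x t : ℝ) : Prop :=
  ∃ Tu Tv : ℂ,
    HasPV δ (fun x' => ((sqAbsDeriv u t x' : ℝ) : ℂ)) x Tu ∧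
    HasPV δ (fun x' => ((sqAbsDeriv v t x' : ℝ) : ℂ)) x Tv ∧
    Integrable (fun x' => ((TtKer δ x x' : ℝ) : ℂ) * ((sqAbsDeriv u t x' : ℝ) : ℂ)) ∧
    Integrable (fun x' => ((TtKer δ x x' : ℝ) : ℂ) * ((sqAbsDeriv v t x' : ℝ) : ℂ)) ∧
    Complex.I * deriv (fun s => u x s) t =
      deriv (fun y => deriv (fun z => u z t) y) x
        + u x t * (Complex.I * ((sqAbsDeriv u t x : ℝ) : ℂ) + Tu)
        - u x t * Ttilde δ (fun x' => ((sqAbsDeriv v t x' : ℝ) : ℂ)) x ∧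
    Complex.I * deriv (fun s => v x s) t =
      deriv (fun y => deriv (fun z => v z t) y) x
        + v x t * (Complex.I * ((sqAbsDeriv v t x : ℝ) : ℂ) - Tv)
        + v x t * Ttilde δ (fun x' => ((sqAbsDeriv u t x' : ℝ) : ℂ)) x

/-- the time interval `[0, τ)` for `τ ∈ (0, ∞]`. -/
def timeDom (τ : ENNReal) : Set ℝ := {t : ℝ | 0 ≤ t ∧ ENNReal.ofReal t < τ}

/-!
Write `A j = α(x - a j - iδ/2)`, whose conjugate is `B j = α(x - conj (a j) + iδ/2)`. The addition
formula for `coth` gives `A j * B k = (π/(2δ))² + (A j - B k) * γ j k` with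
`γ j k = α(a j - conj (a k) + iδ)`; the strip condition keeps all three arguments off the poles
`2δiℤ` of `α`. Expanding `|u|² = u * conj u` as a double sum and inserting this relation produces
the inner sums `∑ k, conj (c k) * γ j k`, which the constraints fix (and, `γ` being skew-Hermitian,
so do their conjugates); what is left is `λ² + (π/(2δ))² |∑ c|² - i ∑ (A j - B j)`. For `v` the
shifts `± iδ/2` are swapped, and the `2iδ`-periodicity of `α` brings the difference of the
arguments back to the same `γ`.
-/

open Complex
open scoped Real

section CmAlpha

variable {δ : ℝ}

theorem cmAlpha_neg (z : ℂ) : cmAlpha δ (-z) = -cmAlpha δ z := by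
  simp only [cmAlpha, mul_neg, neg_div, cosh_neg, sinh_neg, div_neg]

theorem conj_cmAlpha (z : ℂ) : conj (cmAlpha δ z) = cmAlpha δ (conj z) := by
  simp only [cmAlpha, map_mul, map_div₀, ← cosh_conj, ← sinh_conj, conj_ofReal,
    map_ofNat]

theorem cmAlpha_add_two_mul_I (hδ : δ ≠ 0) (z : ℂ) :
    cmAlpha δ (z + 2 * I * δ) = cmAlpha δ z := by
  have hshift : (π : ℂ) * (z + 2 * I * δ) / (2 * δ) = π * z / (2 * δ) + π * I := by
    have hδ' : (δ : ℂ) ≠ 0 := by exact_mod_cast hδ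
    field_simp
  rw [cmAlpha, hshift, cosh_add_pi_mul_I, sinh_add_pi_mul_I, neg_div_neg_eq,
    cmAlpha]

theorem sinh_pi_mul_div_ne_zero (hδ : 0 < δ) (n : ℤ) {z : ℂ} (h₁ : 2 * δ * n < z.im)
    (h₂ : z.im < 2 * δ * (n + 1)) : sinh (π * z / (2 * δ)) ≠ 0 := by
  intro h
  obtain ⟨k, hk⟩ := sin_eq_zero_iff.mp (by rw [sin_mul_I, h, zero_mul] :
    sin (π * z / (2 * δ) * I) = 0)
  have hre := congrArg re hk
  rw [show (π * z / (2 * δ) : ℂ) = ((π / (2 * δ) : ℝ) : ℂ) * z by push_cast; ring,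
    mul_I_re, im_ofReal_mul, re_mul_ofReal, intCast_re] at hre
  have him : z.im = 2 * δ * (-k : ℤ) := by
    field_simp at hre
    push_cast
    linarith
  rw [him] at h₁ h₂
  have : n < -k := by exact_mod_cast lt_of_mul_lt_mul_left h₁ (by positivity)
  have : -k < n + 1 := by exact_mod_cast lt_of_mul_lt_mul_left h₂ (by positivity)
  omega

theorem coth_mul_coth {A B : ℂ} (hA : sinh A ≠ 0) (hB : sinh B ≠ 0) (hBA : sinh (B - A) ≠ 0) :
    cosh A / sinh A * (cosh B / sinh B) =
      1 + (cosh A / sinh A - cosh B / sinh B) * (cosh (B - A) / sinh (B - A)) := by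
  field_simp
  rw [sinh_sub, cosh_sub]
  ring

theorem cmAlpha_mul_cmAlpha {z₁ z₂ : ℂ} (h₁ : sinh (π * z₁ / (2 * δ)) ≠ 0)
    (h₂ : sinh (π * z₂ / (2 * δ)) ≠ 0)
    (h₂₁ : sinh (π * (z₂ - z₁) / (2 * δ)) ≠ 0) :
    cmAlpha δ z₁ * cmAlpha δ z₂ =
      ((π / (2 * δ) : ℝ) : ℂ) ^ 2 + (cmAlpha δ z₁ - cmAlpha δ z₂) * cmAlpha δ (z₂ - z₁) := by
  rw [mul_sub, sub_div] at h₂₁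
  simp only [cmAlpha]
  rw [mul_sub, sub_div]
  linear_combination ((π / (2 * δ) : ℝ) : ℂ) ^ 2 * coth_mul_coth h₁ h₂ h₂₁

end CmAlpha

section Amplitude

variable {ι : Type*} [Fintype ι]

theorem sum_mul_sum_eq_of_mul_eq {R : Type*} [CommRing R] {p q l : R} {c d A B : ι → R}
    {γ : ι → ι → R} (hAB : ∀ j k, A j * B k = p + (A j - B k) * γ j k)
    (hc : ∀ j, c j * ∑ k, d k * γ j k = q * (l * c j + 1))
    (hd : ∀ k, d k * ∑ j, c j * γ j k = q * (l * d k + 1)) :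
    (∑ j, c j * A j) * (∑ k, d k * B k) =
      p * ((∑ j, c j) * ∑ k, d k) + q * (l * ∑ j, c j * A j + ∑ j, A j)
        - q * (l * ∑ k, d k * B k + ∑ k, B k) := by
  calc (∑ j, c j * A j) * (∑ k, d k * B k)
      = ∑ j, ∑ k, (p * (c j * d k) + A j * (c j * (d k * γ j k))
          - B k * (d k * (c j * γ j k))) := by
        rw [Finset.sum_mul_sum]
        refine Finset.sum_congr rfl fun j _ => Finset.sum_congr rfl fun k _ => ?_
        linear_combination (c j * d k) * hAB j k
    _ = p * ((∑ j, c j) * ∑ k, d k) + ∑ j, A j * (c j * ∑ k, d k * γ j k)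
          - ∑ k, B k * (d k * ∑ j, c j * γ j k) := by
        rw [Finset.sum_mul_sum]
        simp only [Finset.sum_add_distrib, Finset.sum_sub_distrib, Finset.mul_sum]
        rw [Finset.sum_comm (f := fun j k => B k * (d k * (c j * γ j k)))]
    _ = _ := by
        have hfactor : ∀ X y : ι → R,
            ∑ j, X j * (q * (l * y j + 1)) = q * (l * ∑ j, y j * X j + ∑ j, X j) := by
          intro X y
          rw [Finset.mul_sum, ← Finset.sum_add_distrib, Finset.mul_sum]
          exact Finset.sum_congr rfl fun j _ => by ring
        simp only [hc, hd, hfactor]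

theorem conj_constraint {lam : ℝ} {c : ι → ℂ} {γ : ι → ι → ℂ}
    (hγ : ∀ j k, conj (γ k j) = -γ j k)
    (hC : ∀ j, c j * (lam - I * ∑ k, conj (c k) * γ j k) + 1 = 0) (k : ι) :
    conj (c k) * (lam - I * ∑ j, c j * γ j k) + 1 = 0 := by
  have h := congrArg conj (hC k)
  simp only [map_add, map_mul, map_sub, map_sum, conj_ofReal, conj_I, conj_conj, hγ, map_one,
    map_zero, mul_neg, Finset.sum_neg_distrib] at h
  linear_combination h

theorem norm_sq_amplitude_eq (lam P : ℝ) {c A B : ι → ℂ} {γ : ι → ι → ℂ}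
    (hγ : ∀ j k, conj (γ k j) = -γ j k)
    (hC : ∀ j, c j * (lam - I * ∑ k, conj (c k) * γ j k) + 1 = 0)
    (hB : ∀ j, conj (A j) = B j)
    (hAB : ∀ j k, A j * B k = (P : ℂ) ^ 2 + (A j - B k) * γ j k) :
    ((‖(lam : ℂ) + I * ∑ j, c j * A j‖ ^ 2 : ℝ) : ℂ) =
      ((lam ^ 2 + P ^ 2 * ‖∑ j, c j‖ ^ 2 : ℝ) : ℂ) - I * ∑ j, (A j - B j) := by
  have hc : ∀ j, c j * ∑ k, conj (c k) * γ j k = -I * (lam * c j + 1) := fun j => by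
    linear_combination I * hC j + (c j * ∑ k, conj (c k) * γ j k) * I_sq
  have hd : ∀ k, conj (c k) * ∑ j, c j * γ j k = -I * (lam * conj (c k) + 1) := fun k => by
    linear_combination I * conj_constraint hγ hC k + (conj (c k) * ∑ j, c j * γ j k) * I_sq
  have hconj : conj ((lam : ℂ) + I * ∑ j, c j * A j) = lam - I * ∑ j, conj (c j) * B j := by
    simp only [map_add, map_mul, map_sum, conj_ofReal, conj_I, hB]
    ring
  push_cast
  rw [← mul_conj', ← mul_conj', hconj, map_sum, Finset.sum_sub_distrib]
  linear_combination sum_mul_sum_eq_of_mul_eq hAB hc hd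
    - ((∑ j, c j * A j) * ∑ j, conj (c j) * B j) * I_sq

end Amplitude

section StripPoles

variable {δ : ℝ}

theorem cmAlpha_mul_cmAlpha_sub_half (hδ : 0 < δ) (x : ℝ) {p q : ℂ}
    (hp : -(3 * δ) / 2 < p.im ∧ p.im < -δ / 2) (hq : -(3 * δ) / 2 < q.im ∧ q.im < -δ / 2) :
    cmAlpha δ (x - p - I * δ / 2) * cmAlpha δ (x - conj q + I * δ / 2) =
      ((π / (2 * δ) : ℝ) : ℂ) ^ 2 + (cmAlpha δ (x - p - I * δ / 2)
        - cmAlpha δ (x - conj q + I * δ / 2)) * cmAlpha δ (p - conj q + I * δ) := by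
  obtain ⟨hp₁, hp₂⟩ := hp
  obtain ⟨hq₁, hq₂⟩ := hq
  have h := cmAlpha_mul_cmAlpha (z₁ := x - p - I * δ / 2) (z₂ := x - conj q + I * δ / 2)
    (sinh_pi_mul_div_ne_zero hδ 0 ?_ ?_) (sinh_pi_mul_div_ne_zero hδ (-1) ?_ ?_)
    (sinh_pi_mul_div_ne_zero hδ (-1) ?_ ?_)
  · rwa [show (x - conj q + I * δ / 2 : ℂ) - (x - p - I * δ / 2) = p - conj q + I * δ by ring] at h
  all_goals
    simp only [sub_im, add_im, mul_im, div_ofNat_im, ofReal_re, ofReal_im, conj_im, I_re, I_im,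
      Int.cast_zero, Int.cast_neg, Int.cast_one]
    linarith

theorem cmAlpha_mul_cmAlpha_add_half (hδ : 0 < δ) (x : ℝ) {p q : ℂ}
    (hp : -(3 * δ) / 2 < p.im ∧ p.im < -δ / 2) (hq : -(3 * δ) / 2 < q.im ∧ q.im < -δ / 2) :
    cmAlpha δ (x - p + I * δ / 2) * cmAlpha δ (x - conj q - I * δ / 2) =
      ((π / (2 * δ) : ℝ) : ℂ) ^ 2 + (cmAlpha δ (x - p + I * δ / 2)
        - cmAlpha δ (x - conj q - I * δ / 2)) * cmAlpha δ (p - conj q + I * δ) := by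
  obtain ⟨hp₁, hp₂⟩ := hp
  obtain ⟨hq₁, hq₂⟩ := hq
  have h := cmAlpha_mul_cmAlpha (z₁ := x - p + I * δ / 2) (z₂ := x - conj q - I * δ / 2)
    (sinh_pi_mul_div_ne_zero hδ 0 ?_ ?_) (sinh_pi_mul_div_ne_zero hδ (-1) ?_ ?_)
    (sinh_pi_mul_div_ne_zero hδ (-2) ?_ ?_)
  · rwa [show (x - conj q - I * δ / 2 : ℂ) - (x - p + I * δ / 2) = p - conj q - I * δ by ring,
      ← cmAlpha_add_two_mul_I hδ.ne' (p - conj q - I * δ),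
      show p - conj q - I * δ + 2 * I * δ = p - conj q + I * δ by ring] at h
  all_goals
    simp only [sub_im, add_im, mul_im, div_ofNat_im, ofReal_re, ofReal_im, conj_im, I_re, I_im,
      Int.cast_zero, Int.cast_neg, Int.cast_one, Int.cast_ofNat]
    linarith

end StripPoles

theorem imm_amplitude_formula_general
    (δ : ℝ) (hδ : 0 < δ) (N : ℕ)
    (lam : ℝ) (a c : Fin N → ℂ)
    (hstrip : ∀ j, -(3 * δ) / 2 < (a j).im ∧ (a j).im < -δ / 2)
    (hC : ∀ j, c j * ((lam : ℂ) - Complex.I * ∑ k, conj (c k) *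
      cmAlpha δ (a j - conj (a k) + Complex.I * (δ : ℂ))) + 1 = 0) :
    ∀ x : ℝ,
      ((norm ((lam : ℂ) + Complex.I *
          ∑ j, c j * cmAlpha δ ((x : ℂ) - a j - Complex.I * (δ : ℂ) / 2)) ^ 2 : ℝ) : ℂ) =
        ((lam ^ 2 + (Real.pi / (2 * δ)) ^ 2 * norm (∑ j, c j) ^ 2 : ℝ) : ℂ)
          - Complex.I * ∑ j, (cmAlpha δ ((x : ℂ) - a j - Complex.I * (δ : ℂ) / 2)
              - cmAlpha δ ((x : ℂ) - conj (a j) + Complex.I * (δ : ℂ) / 2)) ∧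
      ((norm (-(lam : ℂ) - Complex.I *
          ∑ j, c j * cmAlpha δ ((x : ℂ) - a j + Complex.I * (δ : ℂ) / 2)) ^ 2 : ℝ) : ℂ) =
        ((lam ^ 2 + (Real.pi / (2 * δ)) ^ 2 * norm (∑ j, c j) ^ 2 : ℝ) : ℂ)
          - Complex.I * ∑ j, (cmAlpha δ ((x : ℂ) - a j + Complex.I * (δ : ℂ) / 2)
              - cmAlpha δ ((x : ℂ) - conj (a j) - Complex.I * (δ : ℂ) / 2)) := by
  intro x
  have hγ : ∀ j k, conj (cmAlpha δ (a k - conj (a j) + I * δ)) =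
      -cmAlpha δ (a j - conj (a k) + I * δ) := fun j k => by
    rw [conj_cmAlpha, ← cmAlpha_neg]
    congr 1
    simp only [map_add, map_sub, map_mul, conj_conj, conj_I, conj_ofReal]
    ring
  have hconj_sub : ∀ j, conj (cmAlpha δ (x - a j - I * δ / 2)) =
      cmAlpha δ (x - conj (a j) + I * δ / 2) := fun j => by
    rw [conj_cmAlpha]
    congr 1
    simp only [map_sub, map_div₀, map_mul, conj_I, conj_ofReal, map_ofNat]
    ring
  have hconj_add : ∀ j, conj (cmAlpha δ (x - a j + I * δ / 2)) =
      cmAlpha δ (x - conj (a j) - I * δ / 2) := fun j => by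
    rw [conj_cmAlpha]
    congr 1
    simp only [map_add, map_sub, map_div₀, map_mul, conj_I, conj_ofReal, map_ofNat]
    ring
  refine ⟨norm_sq_amplitude_eq lam _ hγ hC hconj_sub
    fun j k => cmAlpha_mul_cmAlpha_sub_half hδ x (hstrip j) (hstrip k), ?_⟩
  rw [← neg_add', norm_neg]
  exact norm_sq_amplitude_eq lam _ hγ hC hconj_add
    fun j k => cmAlpha_mul_cmAlpha_add_half hδ x (hstrip j) (hstrip k)

/-- the squared amplitudes of the pole ansatz. -/
theorem imm_amplitude_formula
    (δ : ℝ) (hδ : 0 < δ) (N : ℕ) (hN : 1 ≤ N)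
    (lam : ℝ) (a c : Fin N → ℂ)
    (hstrip : ∀ j, -(3 * δ) / 2 < (a j).im ∧ (a j).im < -δ / 2)
    (hC : ∀ j, c j * ((lam : ℂ) - Complex.I * ∑ k, conj (c k) *
      cmAlpha δ (a j - conj (a k) + Complex.I * (δ : ℂ))) + 1 = 0) :
    ∀ x : ℝ,
      ((norm ((lam : ℂ) + Complex.I *
          ∑ j, c j * cmAlpha δ ((x : ℂ) - a j - Complex.I * (δ : ℂ) / 2)) ^ 2 : ℝ) : ℂ) =
        ((lam ^ 2 + (Real.pi / (2 * δ)) ^ 2 * norm (∑ j, c j) ^ 2 : ℝ) : ℂ)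
          - Complex.I * ∑ j, (cmAlpha δ ((x : ℂ) - a j - Complex.I * (δ : ℂ) / 2)
              - cmAlpha δ ((x : ℂ) - conj (a j) + Complex.I * (δ : ℂ) / 2)) ∧
      ((norm (-(lam : ℂ) - Complex.I *
          ∑ j, c j * cmAlpha δ ((x : ℂ) - a j + Complex.I * (δ : ℂ) / 2)) ^ 2 : ℝ) : ℂ) =
        ((lam ^ 2 + (Real.pi / (2 * δ)) ^ 2 * norm (∑ j, c j) ^ 2 : ℝ) : ℂ)
          - Complex.I * ∑ j, (cmAlpha δ ((x : ℂ) - a j + Complex.I * (δ : ℂ) / 2)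
              - cmAlpha δ ((x : ℂ) - conj (a j) - Complex.I * (δ : ℂ) / 2)) :=
  imm_amplitude_formula_general δ hδ N lam a c hstrip hC
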